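/- arXiv:2401.15732 — 3 statements merged into one kernel-verified Lean document; each statement's English description precedes it below -/
import Mathlib

section
/- Let X, Y, Z be n×n complex matrices satisfying [X,Y] = κZ, [Y,Z] = κX, [Z,X] = κY for a scalar κ. Then for any complex scalar p, exp(-p•Y) * Z * exp(p•Y) = cos(κp) • Z - sin(κp) • X and exp(-p•Y) * X * exp(p•Y) = cos(κp) • X + sin(κp) • Z. -/
/-!
`Z ± i X` are eigenvectors of `ad Y` with eigenvalues `∓ i κ`, so conjugation by `exp (p Y)`
multiplies them by `exp (± i κ p)`; adding and subtracting the two identities gives the rotation.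
-/

open NormedSpace

open Complex (I) in
theorem Complex.eq_rotation_of_add_I_smul_eq_exp_mul_I_smul {M : Type*} [AddCommGroup M]
    [Module ℂ M] {z x u v : M} {θ : ℂ}
    (hplus : u + I • v = Complex.exp (θ * I) • (z + I • x))
    (hminus : u - I • v = Complex.exp (-(θ * I)) • (z - I • x)) :
    u = Complex.cos θ • z - Complex.sin θ • x ∧ v = Complex.cos θ • x + Complex.sin θ • z := by
  rw [Complex.exp_mul_I] at hplus
  rw [← neg_mul, Complex.exp_mul_I, Complex.cos_neg, Complex.sin_neg] at hminus
  constructor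
  · linear_combination (norm := skip) (2⁻¹ : ℂ) • (hplus + hminus)
    match_scalars <;> grind [Complex.I_sq]
  · linear_combination (norm := skip) (-I / 2) • (hplus - hminus)
    match_scalars <;> grind [Complex.I_sq]

section BanachAlgebra

variable {𝔸 : Type*} [NormedRing 𝔸] [NormedAlgebra ℂ 𝔸] [CompleteSpace 𝔸]

theorem exp_add_smul_one (Y : 𝔸) (c : ℂ) : exp (Y + c • 1) = Complex.exp c • exp Y := by
  let := NormedAlgebra.restrictScalars ℚ ℂ 𝔸
  rw [exp_add_of_commute ((Commute.one_right Y).smul_right c), ← Algebra.algebraMap_eq_smul_one,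
    ← algebraMap_exp_comm, Complex.exp_eq_exp_ℂ, Algebra.algebraMap_eq_smul_one, mul_smul_one]

theorem exp_neg_mul_mul_exp_of_sub_eq_smul {Y B : 𝔸} {c : ℂ} (h : Y * B - B * Y = c • B) :
    exp (-Y) * B * exp Y = Complex.exp (-c) • B := by
  let := NormedAlgebra.restrictScalars ℚ ℂ 𝔸
  have hsemi : SemiconjBy B (Y + c • 1) Y := by
    rw [SemiconjBy, mul_add, mul_smul_one, ← h, add_sub_cancel]
  have hconj := hsemi.exp_neg_mul_mul_exp_eq_self
  rw [exp_add_smul_one, mul_smul_comm] at hconj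
  rw [Complex.exp_neg]
  exact (eq_inv_smul_iff₀ (Complex.exp_ne_zero c)).mpr hconj

open Complex (I) in
theorem exp_neg_smul_mul_mul_exp_smul_eq_rotation {X Y Z : 𝔸} {κ : ℂ}
    (hXY : X * Y - Y * X = κ • Z) (hYZ : Y * Z - Z * Y = κ • X) (p : ℂ) :
    exp (-p • Y) * Z * exp (p • Y)
        = Complex.cos (κ * p) • Z - Complex.sin (κ * p) • X ∧
    exp (-p • Y) * X * exp (p • Y)
        = Complex.cos (κ * p) • X + Complex.sin (κ * p) • Z := by
  have hcomm : ∀ s : ℂ, (p • Y) * (Z + s • X) - (Z + s • X) * (p • Y)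
      = p • (Y * Z - Z * Y) - (p * s) • (X * Y - Y * X) := by
    intro s
    simp only [mul_add, add_mul, smul_mul_assoc, mul_smul_comm, smul_sub, smul_smul]
    module
  have hplus := exp_neg_mul_mul_exp_of_sub_eq_smul (c := -(κ * p * I)) (B := Z + I • X)
    (by rw [hcomm, hXY, hYZ]; match_scalars <;> grind [Complex.I_sq])
  have hminus := exp_neg_mul_mul_exp_of_sub_eq_smul (c := κ * p * I) (B := Z + (-I) • X)
    (by rw [hcomm, hXY, hYZ]; match_scalars <;> grind [Complex.I_sq])
  rw [← neg_smul, neg_neg] at hplus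
  rw [← neg_smul, neg_smul I X, ← sub_eq_add_neg] at hminus
  apply Complex.eq_rotation_of_add_I_smul_eq_exp_mul_I_smul
  · rw [← hplus]; simp only [mul_add, add_mul, mul_smul_comm, smul_mul_assoc]
  · rw [← hminus]; simp only [mul_sub, sub_mul, mul_smul_comm, smul_mul_assoc]

end BanachAlgebra

theorem stmt13_general {n : ℕ} (X Y Z : Matrix (Fin n) (Fin n) ℂ) (κ : ℂ)
    (hXY : X * Y - Y * X = κ • Z) (hYZ : Y * Z - Z * Y = κ • X)
    (p : ℂ) :
    exp (-p • Y) * Z * exp (p • Y)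
        = Complex.cos (κ * p) • Z - Complex.sin (κ * p) • X ∧
    exp (-p • Y) * X * exp (p • Y)
        = Complex.cos (κ * p) • X + Complex.sin (κ * p) • Z := by
  open scoped Matrix.Norms.Operator in
  exact exp_neg_smul_mul_mul_exp_smul_eq_rotation hXY hYZ p

theorem stmt13 {n : ℕ} (X Y Z : Matrix (Fin n) (Fin n) ℂ) (κ : ℂ)
    (hXY : X * Y - Y * X = κ • Z) (hYZ : Y * Z - Z * Y = κ • X)
    (hZX : Z * X - X * Z = κ • Y) (p : ℂ) :
    exp (-p • Y) * Z * exp (p • Y)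
        = Complex.cos (κ * p) • Z - Complex.sin (κ * p) • X ∧
    exp (-p • Y) * X * exp (p • Y)
        = Complex.cos (κ * p) • X + Complex.sin (κ * p) • Z :=
  stmt13_general X Y Z κ hXY hYZ p
end

section
/- Let X, Y, Z be n×n complex matrices with [X,Y] = κZ, [Y,Z] = κX, [Z,X] = κY for a nonzero real scalar κ, and let a, b be real numbers with a > 0. Set q = sqrt(a² + b²) and p = (1/κ)·arctan(b/a). Then exp(a•X + b•Y) = exp(p•Z) * exp(q•X) * exp(-p•Z). -/
/-!
The elements `X ± I • Y` are eigenvectors of `ad Z` with eigenvalues `∓ I * κ`, so conjugation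
by `exp (t • Z)` rotates the span of `X` and `Y` by the angle `κ * t`. Taking `κ * p` to be the
polar angle and `q` the modulus of `(a, b)`, conjugating `q • X` by `exp (p • Z)` gives
`a • X + b • Y`, and `exp` commutes with conjugation.
-/

open NormedSpace

section BanachAlgebra

variable {𝔸 : Type*} [NormedRing 𝔸] [NormedAlgebra ℂ 𝔸] [CompleteSpace 𝔸]

theorem exp_mul_eq_exp_smul_mul_exp_of_commutator_eq_smul {A B : 𝔸} {μ : ℂ}
    (h : A * B - B * A = μ • B) : exp A * B = (Complex.exp μ • B) * exp A := by
  let : NormedAlgebra ℚ 𝔸 := NormedAlgebra.restrictScalars ℚ ℂ 𝔸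
  have hsemi : SemiconjBy B (A + algebraMap ℂ 𝔸 μ) A := by
    rw [SemiconjBy, mul_add, ← Algebra.commutes, ← Algebra.smul_def, ← h, add_sub_cancel]
  rw [← hsemi.exp_right.eq, exp_add_of_commute (Algebra.commutes μ A).symm,
    ← algebraMap_exp_comm, ← Complex.exp_eq_exp_ℂ, ← mul_assoc, ← Algebra.commutes,
    Algebra.smul_def, mul_assoc]

open Complex in
theorem semiconjBy_exp_smul_cos_smul_add_sin_smul {X Y Z : 𝔸} {κ : ℂ}
    (hYZ : Y * Z - Z * Y = κ • X) (hZX : Z * X - X * Z = κ • Y) (t : ℂ) :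
    SemiconjBy (exp (t • Z)) X (cos (κ * t) • X + sin (κ * t) • Y) := by
  have hplus : (t • Z) * (X + I • Y) - (X + I • Y) * (t • Z) = (-(κ * t) * I) • (X + I • Y) :=
    calc _ = t • (Z * X - X * Z) - (t * I) • (Y * Z - Z * Y) := by
          simp only [mul_add, add_mul, smul_mul_assoc, mul_smul_comm, smul_sub, smul_smul]
          module
      _ = _ := by
        rw [hZX, hYZ]
        linear_combination (norm := module) (κ * t) • I_sq • Y
  have hminus : (t • Z) * (X - I • Y) - (X - I • Y) * (t • Z) = ((κ * t) * I) • (X - I • Y) :=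
    calc _ = t • (Z * X - X * Z) + (t * I) • (Y * Z - Z * Y) := by
          simp only [mul_sub, sub_mul, smul_mul_assoc, mul_smul_comm, smul_sub, smul_smul]
          module
      _ = _ := by
        rw [hZX, hYZ]
        linear_combination (norm := module) (κ * t) • I_sq • Y
  have hX : X = (2 : ℂ)⁻¹ • ((X + I • Y) + (X - I • Y)) := by module
  rw [SemiconjBy]
  conv_lhs =>
    rw [hX, mul_smul_comm, mul_add, exp_mul_eq_exp_smul_mul_exp_of_commutator_eq_smul hplus,
      exp_mul_eq_exp_smul_mul_exp_of_commutator_eq_smul hminus, ← add_mul, ← smul_mul_assoc]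
  rw [exp_mul_I, exp_mul_I, cos_neg, sin_neg]
  congr 1
  linear_combination (norm := module) -sin (κ * t) • I_sq • Y

theorem exp_smul_add_smul_eq_exp_mul_exp_mul_exp_neg {X Y Z : 𝔸} {κ : ℂ}
    (hYZ : Y * Z - Z * Y = κ • X) (hZX : Z * X - X * Z = κ • Y) (t r : ℂ) :
    exp ((r * Complex.cos (κ * t)) • X + (r * Complex.sin (κ * t)) • Y) =
      exp (t • Z) * exp (r • X) * exp (-(t • Z)) := by
  let : NormedAlgebra ℚ 𝔸 := NormedAlgebra.restrictScalars ℚ ℂ 𝔸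
  have h := ((semiconjBy_exp_smul_cos_smul_add_sin_smul hYZ hZX t).smul_right r).exp_right
  rw [h.eq, mul_assoc, ← exp_add_of_commute (Commute.refl _).neg_right, add_neg_cancel,
    exp_zero, mul_one, smul_add, smul_smul, smul_smul]

end BanachAlgebra

namespace Real

theorem sqrt_one_add_div_sq {a : ℝ} (ha : 0 < a) (b : ℝ) :
    √(1 + (b / a) ^ 2) = √(a ^ 2 + b ^ 2) / a := by
  rw [show 1 + (b / a) ^ 2 = (a ^ 2 + b ^ 2) / a ^ 2 by field_simp,
    sqrt_div' _ (sq_nonneg a), sqrt_sq ha.le]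

theorem sqrt_sq_add_sq_mul_cos_arctan_div {a : ℝ} (ha : 0 < a) (b : ℝ) :
    √(a ^ 2 + b ^ 2) * cos (arctan (b / a)) = a := by
  have : 0 < √(a ^ 2 + b ^ 2) := by positivity
  rw [cos_arctan, sqrt_one_add_div_sq ha]
  field_simp

theorem sqrt_sq_add_sq_mul_sin_arctan_div {a : ℝ} (ha : 0 < a) (b : ℝ) :
    √(a ^ 2 + b ^ 2) * sin (arctan (b / a)) = b := by
  have : 0 < √(a ^ 2 + b ^ 2) := by positivity
  rw [sin_arctan, sqrt_one_add_div_sq ha]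
  field_simp

end Real

theorem stmt15_general {n : ℕ} (X Y Z : Matrix (Fin n) (Fin n) ℂ) (κ : ℝ) (hκ : κ ≠ 0)
    (hYZ : Y * Z - Z * Y = κ • X)
    (hZX : Z * X - X * Z = κ • Y) (a b : ℝ) (ha : 0 < a)
    (p q : ℝ) (hp : p = (1 / κ) * Real.arctan (b / a)) (hq : q = Real.sqrt (a ^ 2 + b ^ 2)) :
    exp (a • X + b • Y) = exp (p • Z) * exp (q • X) * exp (-p • Z) := by
  let : NormedRing (Matrix (Fin n) (Fin n) ℂ) := Matrix.linftyOpNormedRing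
  let : NormedAlgebra ℂ (Matrix (Fin n) (Fin n) ℂ) := Matrix.linftyOpNormedAlgebra
  have hθ : κ * p = Real.arctan (b / a) := by rw [hp]; field_simp
  have hcos : (q : ℂ) * Complex.cos (κ * p) = a := by
    exact_mod_cast congrArg Complex.ofReal
      (hq ▸ hθ ▸ Real.sqrt_sq_add_sq_mul_cos_arctan_div ha b)
  have hsin : (q : ℂ) * Complex.sin (κ * p) = b := by
    exact_mod_cast congrArg Complex.ofReal
      (hq ▸ hθ ▸ Real.sqrt_sq_add_sq_mul_sin_arctan_div ha b)
  rw [neg_smul]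
  simp only [← Complex.coe_smul] at hYZ hZX ⊢
  rw [← hcos, ← hsin]
  exact exp_smul_add_smul_eq_exp_mul_exp_mul_exp_neg hYZ hZX p q

theorem stmt15 {n : ℕ} (X Y Z : Matrix (Fin n) (Fin n) ℂ) (κ : ℝ) (hκ : κ ≠ 0)
    (hXY : X * Y - Y * X = κ • Z) (hYZ : Y * Z - Z * Y = κ • X)
    (hZX : Z * X - X * Z = κ • Y) (a b : ℝ) (ha : 0 < a)
    (p q : ℝ) (hp : p = (1 / κ) * Real.arctan (b / a)) (hq : q = Real.sqrt (a ^ 2 + b ^ 2)) :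
    exp (a • X + b • Y) = exp (p • Z) * exp (q • X) * exp (-p • Z) :=
  stmt15_general X Y Z κ hκ hYZ hZX a b ha p q hp hq
end

section
/- Let X, Y, Z be n×n complex matrices with [X,Y] = κZ, [Y,Z] = κX, [Z,X] = κY for a nonzero real κ, and let a, b, c be real numbers with a > 0 and c > 0. Set p₁ = (1/κ)·arctan(b/a), q₁' = (1/κ)·arctan(sqrt(a²+b²)/c), and r = sqrt(a²+b²+c²). Then exp(a•X + b•Y + c•Z) = exp(p₁•Z) * exp(q₁'•Y) * exp(r•Z) * exp(-q₁'•Y) * exp(-p₁•Z). -/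
/-!
The relations say that `X, Y, Z` span a copy of `𝔰𝔬(3)` (scaled by `κ`), so conjugating by
`exp (t • Z)` rotates the `(X, Y)`-plane by the angle `κ t` and conjugating by `exp (t • Y)`
rotates the `(Z, X)`-plane by `κ t`. Since `exp g * exp v * exp (-g) = exp (exp g * v * exp (-g))`,
the right-hand side is the exponential of `r • Z` rotated first by the polar angle `κ q₁'` towards
`X` and then by the azimuth `κ p₁` towards `Y`; with the arctangents in the statement these are
exactly the spherical coordinates of `(a, b, c)`, and `r` is its length.
-/

open NormedSpace

section RatAlgebra

variable {𝔸 : Type*} [NormedRing 𝔸] [NormedAlgebra ℚ 𝔸] [CompleteSpace 𝔸]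

theorem exp_mul_exp_neg (x : 𝔸) : exp x * exp (-x) = 1 := by
  rw [← exp_add_of_commute (Commute.refl x).neg_right, add_neg_cancel, exp_zero]

theorem exp_conj_exp (g x : 𝔸) :
    exp (exp g * x * exp (-g)) = exp g * exp x * exp (-g) :=
  exp_units_conj ⟨exp g, exp (-g), exp_mul_exp_neg g, by simpa using exp_mul_exp_neg (-g)⟩ x

theorem exp_conj_of_commute {g x : 𝔸} (h : Commute g x) : exp g * x * exp (-g) = x := by
  simpa using SemiconjBy.exp_neg_mul_mul_exp_eq_self h.symm.neg_right

end RatAlgebra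

section RealAlgebra

variable {𝔸 : Type*} [NormedRing 𝔸] [NormedAlgebra ℝ 𝔸] [CompleteSpace 𝔸]

theorem exp_smul_conj_eq_of_hasDerivAt {A : 𝔸} {M : ℝ → 𝔸}
    (hM : ∀ s, HasDerivAt M (A * M s - M s * A) s) (t : ℝ) :
    exp (t • A) * M 0 * exp (-(t • A)) = M t := by
  let := NormedAlgebra.restrictScalars ℚ ℝ 𝔸
  set F : ℝ → 𝔸 := fun s => exp (s • -A) * M s * exp (s • A)
  have hF : ∀ s, HasDerivAt F 0 s := fun s =>
    (((hasDerivAt_exp_smul_const (-A) s).mul (hM s)).mul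
      (hasDerivAt_exp_smul_const' A s)).congr_deriv (by simp only [Pi.mul_apply]; noncomm_ring)
  have hFconst : F t = F 0 :=
    is_const_of_deriv_eq_zero (fun s => (hF s).differentiableAt) (fun s => (hF s).deriv) t 0
  have hF0 : F 0 = M 0 := by simp [F]
  rw [← hF0, ← hFconst]
  calc exp (t • A) * (exp (t • -A) * M t * exp (t • A)) * exp (-(t • A))
      = (exp (t • A) * exp (-(t • A))) * M t * (exp (t • A) * exp (-(t • A))) := by
        rw [smul_neg]; noncomm_ring
    _ = M t := by rw [exp_mul_exp_neg]; noncomm_ring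

theorem exp_smul_conj_eq_cos_smul_add_sin_smul {A B C : 𝔸} {κ : ℝ}
    (hAB : A * B - B * A = κ • C) (hAC : A * C - C * A = -(κ • B)) (t : ℝ) :
    exp (t • A) * B * exp (-(t • A)) = Real.cos (κ * t) • B + Real.sin (κ * t) • C := by
  set M : ℝ → 𝔸 := fun s => Real.cos (κ * s) • B + Real.sin (κ * s) • C
  have hM : ∀ s, HasDerivAt M (A * M s - M s * A) s := by
    intro s
    have hlin : HasDerivAt (fun u : ℝ => κ * u) κ s := by
      simpa using (hasDerivAt_id s).const_mul κ
    refine ((((Real.hasDerivAt_cos _).comp s hlin).smul_const B).add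
      (((Real.hasDerivAt_sin _).comp s hlin).smul_const C)).congr_deriv ?_
    have hcomm : A * M s - M s * A
        = Real.cos (κ * s) • (A * B - B * A) + Real.sin (κ * s) • (A * C - C * A) := by
      simp only [M, mul_add, add_mul, mul_smul_comm, smul_mul_assoc, smul_sub]
      abel
    rw [hcomm, hAB, hAC]
    module
  simpa [M] using exp_smul_conj_eq_of_hasDerivAt hM t

theorem exp_spherical_eq_exp_conj {X Y Z : 𝔸} {κ : ℝ}
    (hXY : X * Y - Y * X = κ • Z) (hYZ : Y * Z - Z * Y = κ • X)
    (hZX : Z * X - X * Z = κ • Y) (p q r : ℝ) :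
    exp ((r * Real.sin (κ * q) * Real.cos (κ * p)) • X
        + (r * Real.sin (κ * q) * Real.sin (κ * p)) • Y + (r * Real.cos (κ * q)) • Z)
      = exp (p • Z) * exp (q • Y) * exp (r • Z) * exp (-q • Y) * exp (-p • Z) := by
  let := NormedAlgebra.restrictScalars ℚ ℝ 𝔸
  have hrotY := exp_smul_conj_eq_cos_smul_add_sin_smul hYZ (by rw [← hXY, neg_sub]) q
  have hrotZ := exp_smul_conj_eq_cos_smul_add_sin_smul hZX (by rw [← hYZ, neg_sub]) p
  have hfixZ : exp (p • Z) * Z * exp (-(p • Z)) = Z :=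
    exp_conj_of_commute ((Commute.refl Z).smul_left p)
  have hinner : exp (q • Y) * (r • Z) * exp (-(q • Y))
      = (r * Real.cos (κ * q)) • Z + (r * Real.sin (κ * q)) • X := by
    rw [mul_smul_comm, smul_mul_assoc, hrotY]
    module
  have houter : exp (p • Z) * ((r * Real.cos (κ * q)) • Z + (r * Real.sin (κ * q)) • X)
        * exp (-(p • Z))
      = (r * Real.sin (κ * q) * Real.cos (κ * p)) • X
        + (r * Real.sin (κ * q) * Real.sin (κ * p)) • Y + (r * Real.cos (κ * q)) • Z := by
    simp only [mul_add, add_mul, mul_smul_comm, smul_mul_assoc, hfixZ, hrotZ]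
    module
  rw [← houter, ← hinner, exp_conj_exp, exp_conj_exp, neg_smul, neg_smul]
  noncomm_ring

end RealAlgebra

open scoped Matrix.Norms.Operator

theorem stmt19 {n : ℕ} (X Y Z : Matrix (Fin n) (Fin n) ℂ) (κ : ℝ) (hκ : κ ≠ 0)
    (hXY : X * Y - Y * X = κ • Z) (hYZ : Y * Z - Z * Y = κ • X)
    (hZX : Z * X - X * Z = κ • Y) (a b c : ℝ) (ha : 0 < a) (hc : 0 < c)
    (p₁ q₁' r : ℝ)
    (hp₁ : p₁ = (1 / κ) * Real.arctan (b / a))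
    (hq₁' : q₁' = (1 / κ) * Real.arctan (Real.sqrt (a ^ 2 + b ^ 2) / c))
    (hr : r = Real.sqrt (a ^ 2 + b ^ 2 + c ^ 2)) :
    exp (a • X + b • Y + c • Z)
      = exp (p₁ • Z) * exp (q₁' • Y) * exp (r • Z) * exp (-q₁' • Y)
        * exp (-p₁ • Z) := by
  set s := √(a ^ 2 + b ^ 2)
  have hκp : κ * p₁ = Real.arctan (b / a) := by rw [hp₁]; field_simp
  have hκq : κ * q₁' = Real.arctan (s / c) := by rw [hq₁']; field_simp
  have hr' : r = √(c ^ 2 + s ^ 2) := by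
    rw [hr, Real.sq_sqrt (by positivity), add_comm (c ^ 2)]
  have hsin_q : r * Real.sin (κ * q₁') = s := by
    rw [hr', hκq, Real.sqrt_sq_add_sq_mul_sin_arctan_div hc]
  have hcos_q : r * Real.cos (κ * q₁') = c := by
    rw [hr', hκq, Real.sqrt_sq_add_sq_mul_cos_arctan_div hc]
  have key := exp_spherical_eq_exp_conj hXY hYZ hZX p₁ q₁' r
  rwa [hsin_q, hcos_q, hκp, Real.sqrt_sq_add_sq_mul_cos_arctan_div ha,
    Real.sqrt_sq_add_sq_mul_sin_arctan_div ha] at key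
end
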